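/- arXiv:2202.11549 — 4 statements merged into one kernel-verified Lean document; each statement's English description precedes it below -/
import Mathlib

section
/- Assume T_h^+ and T_h^- both have positive Lebesgue measure. Then there exists exactly one pair of affine functions (φ_J^+, φ_J^-) on ℝ^N such that: φ_J^+ = φ_J^- on H; (∇φ_J^+ − ∇φ_J^-)·n = 1; and the piecewise function φ_J (equal to φ_J^± on T_h^±) has vanishing average over every face F_i, i = 1,…,N+1. Moreover this pair is given explicitly by φ_J^+ = d_H − Π_T w and φ_J^- = −Π_T w, where d_H(x) = (x − x_0)·n; i.e., φ_J = w − Π_T w on T. -/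
open MeasureTheory Metric Set
open scoped RealInnerProductSpace

noncomputable section

/-- Euclidean space `ℝ^N`. -/
abbrev Euc (N : ℕ) := EuclideanSpace ℝ (Fin N)

/-- The average of `f` over a set `S` with respect to the `(N-1)`-dimensional
Hausdorff measure: `(1/|S|) ∫_S f dH^{N-1}`. -/
noncomputable def faceAvg {N : ℕ} (S : Set (Euc N)) (f : Euc N → ℝ) : ℝ :=
  (μH[(N : ℝ) - 1] S).toReal⁻¹ * ∫ x in S, f x ∂(μH[(N : ℝ) - 1])

/-- Evaluation of the affine function with gradient `p.1` and constant `p.2`. -/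
noncomputable def affEval {N : ℕ} (p : Euc N × ℝ) (x : Euc N) : ℝ := ⟪p.1, x⟫ + p.2

/-- The function equal to `fp` on the positive side of the hyperplane through `x₀`
with normal `nv`, and to `fm` elsewhere. -/
noncomputable def pwFun {N : ℕ} (x₀ nv : Euc N) (fp fm : Euc N → ℝ) (x : Euc N) : ℝ :=
  if 0 < ⟪x - x₀, nv⟫ then fp x else fm x

/-!
Agreement on `H` and the unit jump of the normal derivative say that `φ_J^+ - φ_J^-` is an affine
function vanishing on `H` with unit normal derivative, i.e. `d_H`; since `w = max d_H 0`, this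
makes `φ_J = φ_J^- + w`, and the face conditions prescribe the face averages of `φ_J^-` to be those
of `-w`. Taking face averages is a linear map between spaces of dimension `N + 1` with the
Crouzeix–Raviart functions as a right inverse, hence bijective, so `φ_J^- = -Π_T w`.
-/

section Hyperplane

variable {E : Type*} [NormedAddCommGroup E] [InnerProductSpace ℝ E] {n : E}

lemma inner_sub_inner_smul_sub_eq_zero (hn : ‖n‖ = 1) (x₀ x : E) :
    ⟪x - ⟪x - x₀, n⟫ • n - x₀, n⟫ = 0 := by
  rw [sub_right_comm, inner_sub_left, real_inner_smul_left, real_inner_self_eq_norm_sq, hn]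
  ring

lemma infDist_hyperplane_eq_abs_inner (hn : ‖n‖ = 1) (x₀ x : E) :
    infDist x {y | ⟪y - x₀, n⟫ = 0} = |⟪x - x₀, n⟫| := by
  refine le_antisymm ?_ ((le_infDist ⟨x₀, by simp⟩).2 fun y hy => ?_)
  · calc infDist x {y | ⟪y - x₀, n⟫ = 0}
        ≤ dist x (x - ⟪x - x₀, n⟫ • n) :=
          infDist_le_dist_of_mem (inner_sub_inner_smul_sub_eq_zero hn x₀ x)
      _ = |⟪x - x₀, n⟫| := by
          rw [dist_eq_norm, sub_sub_cancel, norm_smul, hn, mul_one, Real.norm_eq_abs]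
  · calc |⟪x - x₀, n⟫| = |⟪x - y, n⟫| := by
          rw [← sub_add_sub_cancel x y x₀, inner_add_left, show ⟪y - x₀, n⟫ = 0 from hy,
            add_zero]
      _ ≤ ‖x - y‖ * ‖n‖ := abs_real_inner_le_norm _ _
      _ = dist x y := by rw [hn, mul_one, dist_eq_norm]

lemma ite_infDist_hyperplane_eq_max (hn : ‖n‖ = 1) (x₀ x : E) :
    (if 0 < ⟪x - x₀, n⟫ then infDist x {y | ⟪y - x₀, n⟫ = 0} else 0) = max ⟪x - x₀, n⟫ 0 := by
  rw [infDist_hyperplane_eq_abs_inner hn]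
  split_ifs with hx
  · rw [abs_of_pos hx, max_eq_left hx.le]
  · rw [max_eq_right (not_lt.1 hx)]

lemma inner_add_eq_mul_inner_of_vanishes_on_hyperplane (hn : ‖n‖ = 1) {x₀ g : E} {c : ℝ}
    (h : ∀ y, ⟪y - x₀, n⟫ = 0 → ⟪g, y⟫ + c = 0) (x : E) :
    ⟪g, x⟫ + c = ⟪g, n⟫ * ⟪x - x₀, n⟫ := by
  have h₀ := h _ (inner_sub_inner_smul_sub_eq_zero hn x₀ x)
  rw [inner_sub_right, real_inner_smul_right] at h₀
  linarith

end Hyperplane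

section AffineFunctions

variable {N : ℕ}

@[simp] lemma affEval_add (p q : Euc N × ℝ) (x : Euc N) :
    affEval (p + q) x = affEval p x + affEval q x := by
  simp only [affEval, Prod.fst_add, Prod.snd_add, inner_add_left]
  ring

@[simp] lemma affEval_smul (c : ℝ) (p : Euc N × ℝ) (x : Euc N) :
    affEval (c • p) x = c * affEval p x := by
  simp only [affEval, Prod.smul_fst, Prod.smul_snd, real_inner_smul_left, smul_eq_mul]
  ring

@[simp] lemma affEval_sub (p q : Euc N × ℝ) (x : Euc N) :
    affEval (p - q) x = affEval p x - affEval q x := by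
  simp only [affEval, Prod.fst_sub, Prod.snd_sub, inner_sub_left]
  ring

def affEvalLinear : (Euc N × ℝ) →ₗ[ℝ] Euc N → ℝ where
  toFun := affEval
  map_add' p q := funext (affEval_add p q)
  map_smul' c p := funext (affEval_smul c p)

@[simp] lemma affEvalLinear_apply (p : Euc N × ℝ) : affEvalLinear p = affEval p := rfl

lemma affEval_injective : Function.Injective (affEval : Euc N × ℝ → Euc N → ℝ) := by
  intro p q hpq
  have hconst : p.2 = q.2 := by simpa [affEval] using congrFun hpq 0
  have hgrad : ⟪p.1 - q.1, p.1 - q.1⟫ = 0 := by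
    have := congrFun hpq (p.1 - q.1)
    simp only [affEval, hconst, add_left_inj] at this
    rw [inner_sub_left, this, sub_self]
  exact Prod.ext (sub_eq_zero.1 (inner_self_eq_zero.1 hgrad)) hconst

def signedDistCoeff (x₀ n : Euc N) : Euc N × ℝ := (n, -⟪n, x₀⟫)

@[simp] lemma affEval_signedDistCoeff (x₀ n x : Euc N) :
    affEval (signedDistCoeff x₀ n) x = ⟪x - x₀, n⟫ := by
  simp only [affEval, signedDistCoeff, inner_sub_left, real_inner_comm]
  ring

lemma affEval_agree_on_hyperplane_and_jump_iff {x₀ n : Euc N} (hn : ‖n‖ = 1)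
    {p q : Euc N × ℝ} :
    ((∀ x, ⟪x - x₀, n⟫ = 0 → affEval p x = affEval q x) ∧ ⟪p.1 - q.1, n⟫ = 1) ↔
      p = q + signedDistCoeff x₀ n := by
  constructor
  · rintro ⟨hagree, hjump⟩
    rw [← sub_eq_iff_eq_add']
    refine affEval_injective (funext fun x => ?_)
    have h := inner_add_eq_mul_inner_of_vanishes_on_hyperplane hn
      (fun y hy => (affEval_sub p q y).trans (sub_eq_zero.2 (hagree y hy))) x
    rw [Prod.fst_sub, hjump, one_mul] at h
    rw [affEval_signedDistCoeff]
    exact h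
  · rintro rfl
    refine ⟨fun x hx => by simp [hx], ?_⟩
    simp [signedDistCoeff, hn]

lemma pwFun_add_signedDistCoeff (x₀ n : Euc N) (q : Euc N × ℝ) :
    pwFun x₀ n (affEval (q + signedDistCoeff x₀ n)) (affEval q) =
      affEval q + fun x => max ⟪x - x₀, n⟫ 0 := by
  funext x
  by_cases hx : 0 < ⟪x - x₀, n⟫
  · simp [pwFun, hx, hx.le]
  · simp [pwFun, hx, not_lt.1 hx]

end AffineFunctions

section FaceAverage

variable {N : ℕ} {S : Set (Euc N)}

lemma faceAvg_add {f g : Euc N → ℝ} (hf : IntegrableOn f S μH[(N : ℝ) - 1])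
    (hg : IntegrableOn g S μH[(N : ℝ) - 1]) :
    faceAvg S (f + g) = faceAvg S f + faceAvg S g := by
  rw [faceAvg, integral_add' hf hg, mul_add]
  rfl

lemma faceAvg_smul (c : ℝ) (f : Euc N → ℝ) : faceAvg S (c • f) = c * faceAvg S f := by
  rw [faceAvg, faceAvg, Pi.smul_def, integral_smul, smul_eq_mul]
  ring

lemma integrableOn_hausdorff_of_continuous (hS : IsCompact S)
    (hfin : μH[(N : ℝ) - 1] S ≠ ⊤) {f : Euc N → ℝ} (hf : Continuous f) :
    IntegrableOn f S μH[(N : ℝ) - 1] :=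
  hf.continuousOn.integrableOn_of_subset_isCompact hS hS.measurableSet subset_rfl hfin

lemma continuous_affEval (p : Euc N × ℝ) : Continuous (affEval p) := by
  unfold affEval
  fun_prop

def faceAvgLinear (S : Set (Euc N)) (hS : IsCompact S) (hfin : μH[(N : ℝ) - 1] S ≠ ⊤) :
    (Euc N × ℝ) →ₗ[ℝ] ℝ where
  toFun p := faceAvg S (affEval p)
  map_add' p q := by
    simp only [← affEvalLinear_apply, map_add]
    exact faceAvg_add (integrableOn_hausdorff_of_continuous hS hfin (continuous_affEval p))
      (integrableOn_hausdorff_of_continuous hS hfin (continuous_affEval q))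
  map_smul' c p := by
    simp only [← affEvalLinear_apply, map_smul]
    exact faceAvg_smul c _

lemma faceAvg_pwFun_add_signedDistCoeff (hS : IsCompact S) (hfin : μH[(N : ℝ) - 1] S ≠ ⊤)
    (x₀ n : Euc N) (q : Euc N × ℝ) :
    faceAvg S (pwFun x₀ n (affEval (q + signedDistCoeff x₀ n)) (affEval q)) =
      faceAvg S (affEval q) + faceAvg S (fun x => max ⟪x - x₀, n⟫ 0) := by
  rw [pwFun_add_signedDistCoeff]
  exact faceAvg_add (integrableOn_hausdorff_of_continuous hS hfin (continuous_affEval q))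
    (integrableOn_hausdorff_of_continuous hS hfin (by fun_prop))

end FaceAverage

section JumpPair

variable {N : ℕ} {ι : Type*}

/-- The conditions defining `(φ_J^+, φ_J^-)`, given by the coefficient pairs of `affEval`. -/
def IsJumpPair (F : ι → Set (Euc N)) (x₀ n : Euc N) (p : (Euc N × ℝ) × (Euc N × ℝ)) : Prop :=
  (∀ x ∈ {x | ⟪x - x₀, n⟫ = 0}, affEval p.1 x = affEval p.2 x) ∧
    ⟪p.1.1 - p.2.1, n⟫ = 1 ∧
    ∀ j, faceAvg (F j) (pwFun x₀ n (affEval p.1) (affEval p.2)) = 0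

lemma isJumpPair_iff {F : ι → Set (Euc N)} {x₀ n : Euc N} (hn : ‖n‖ = 1) {q₀ : Euc N × ℝ}
    (hface : ∀ q, (∀ j, faceAvg (F j)
      (pwFun x₀ n (affEval (q + signedDistCoeff x₀ n)) (affEval q)) = 0) ↔ q = q₀)
    (p : (Euc N × ℝ) × (Euc N × ℝ)) :
    IsJumpPair F x₀ n p ↔ p = (q₀ + signedDistCoeff x₀ n, q₀) := by
  obtain ⟨p, q⟩ := p
  simp only [IsJumpPair, Set.mem_ofPred_eq]
  rw [Prod.mk.injEq, ← and_assoc, affEval_agree_on_hyperplane_and_jump_iff hn]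
  constructor
  · rintro ⟨rfl, havg⟩
    obtain rfl := (hface q).1 havg
    exact ⟨rfl, rfl⟩
  · rintro ⟨rfl, rfl⟩
    exact ⟨rfl, (hface _).2 rfl⟩

end JumpPair

lemma LinearMap.apply_eq_iff_eq_sum_smul_of_apply_eq_ite {K V ι : Type*} [Field K]
    [AddCommGroup V] [Module K V] [FiniteDimensional K V] [Fintype ι] [DecidableEq ι]
    (Φ : V →ₗ[K] ι → K) (hdim : Module.finrank K V = Fintype.card ι) (b : ι → V)
    (hb : ∀ i j, Φ (b i) j = if i = j then 1 else 0) (p : V) (y : ι → K) :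
    Φ p = y ↔ p = ∑ i, y i • b i := by
  have hsum : ∀ y : ι → K, Φ (∑ i, y i • b i) = y := fun y => funext fun j => by
    simp [map_sum, hb]
  have hinj : Function.Injective Φ :=
    (LinearMap.injective_iff_surjective_of_finrank_eq_finrank (by simpa using hdim)).2
      fun y => ⟨_, hsum y⟩
  exact ⟨fun h => hinj (by rw [h, hsum]), fun h => h ▸ hsum y⟩

theorem statement2_general
    (N : ℕ)
    (v : Fin (N + 1) → Euc N)
    (Tset : Set (Euc N))
    (F : Fin (N + 1) → Set (Euc N))
    (hF : ∀ i, F i = convexHull ℝ (v '' ({i}ᶜ : Set (Fin (N + 1)))))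
    (nv x₀ : Euc N) (hn : ‖nv‖ = 1)
    (Hpl : Set (Euc N)) (hH : Hpl = {x | ⟪x - x₀, nv⟫ = 0})
    (w : Euc N → ℝ)
    (hw : ∀ x, w x = if 0 < ⟪x - x₀, nv⟫ then infDist x Hpl else 0)
    (lam : Fin (N + 1) → Euc N × ℝ)
    (hlam : ∀ i j, faceAvg (F j) (affEval (lam i)) = if i = j then (1 : ℝ) else 0)
    (PiTw : Euc N → ℝ)
    (hPiw : ∀ x, PiTw x = ∑ i, faceAvg (F i) w * affEval (lam i) x) :
    (∃! p : (Euc N × ℝ) × (Euc N × ℝ),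
        (∀ x ∈ Hpl, affEval p.1 x = affEval p.2 x) ∧
        ⟪p.1.1 - p.2.1, nv⟫ = 1 ∧
        (∀ j, faceAvg (F j) (pwFun x₀ nv (affEval p.1) (affEval p.2)) = 0)) ∧
    (∀ p : (Euc N × ℝ) × (Euc N × ℝ),
        ((∀ x ∈ Hpl, affEval p.1 x = affEval p.2 x) ∧
          ⟪p.1.1 - p.2.1, nv⟫ = 1 ∧
          (∀ j, faceAvg (F j) (pwFun x₀ nv (affEval p.1) (affEval p.2)) = 0)) →
        (∀ x, affEval p.1 x = ⟪x - x₀, nv⟫ - PiTw x) ∧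
        (∀ x, affEval p.2 x = -(PiTw x)) ∧
        (∀ x ∈ Tset, pwFun x₀ nv (affEval p.1) (affEval p.2) x = w x - PiTw x)) := by
  subst hH
  have hw_eq : w = fun x => max ⟪x - x₀, nv⟫ 0 :=
    funext fun x => (hw x).trans (ite_infDist_hyperplane_eq_max hn x₀ x)
  have hfin : ∀ j, μH[(N : ℝ) - 1] (F j) ≠ ⊤ := fun j htop => by
    simpa [faceAvg, htop] using hlam j j
  have hcomp : ∀ j, IsCompact (F j) := fun j => by
    rw [hF]
    exact ((Set.toFinite _).image v).isCompact_convexHull ℝ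
  let Φ : (Euc N × ℝ) →ₗ[ℝ] Fin (N + 1) → ℝ :=
    LinearMap.pi fun j => faceAvgLinear (F j) (hcomp j) (hfin j)
  have hΦ := Φ.apply_eq_iff_eq_sum_smul_of_apply_eq_ite (by simp) lam hlam
  set pm := ∑ i, -faceAvg (F i) w • lam i
  have hpm_eval : ∀ x, affEval pm x = -PiTw x := fun x => by
    simp [pm, hPiw, ← affEvalLinear_apply, map_sum, Finset.sum_neg_distrib]
  have hchar := isJumpPair_iff (F := F) hn (q₀ := pm) fun q => by
    rw [← hΦ, funext_iff]
    refine forall_congr' fun j => ?_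
    rw [faceAvg_pwFun_add_signedDistCoeff (hcomp j) (hfin j), ← hw_eq, add_eq_zero_iff_eq_neg]
    rfl
  refine ⟨⟨_, (hchar _).2 rfl, fun p hp => (hchar p).1 hp⟩, fun p hp => ?_⟩
  obtain rfl := (hchar p).1 hp
  refine ⟨fun x => ?_, hpm_eval, fun x _ => ?_⟩
  · rw [affEval_add, hpm_eval, affEval_signedDistCoeff]
    ring
  · rw [pwFun_add_signedDistCoeff, hw_eq, Pi.add_apply, hpm_eval]
    ring

/-- Existence, uniqueness and the explicit formula for the pair of affine functions
`(φ_J^+, φ_J^-)` agreeing on `H`, with unit jump of the normal derivative, and with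
vanishing averages of the piecewise function over all faces:
`φ_J^+ = d_H - Π_T w`, `φ_J^- = -Π_T w`, i.e. `φ_J = w - Π_T w` on `T`. -/
theorem statement2
    (N : ℕ) (hN : N = 2 ∨ N = 3)
    (v : Fin (N + 1) → Euc N) (hv : AffineIndependent ℝ v)
    (Tset : Set (Euc N)) (hTset : Tset = convexHull ℝ (Set.range v))
    (F : Fin (N + 1) → Set (Euc N))
    (hF : ∀ i, F i = convexHull ℝ (v '' ({i}ᶜ : Set (Fin (N + 1)))))
    (nv x₀ : Euc N) (hn : ‖nv‖ = 1)
    (Hpl : Set (Euc N)) (hH : Hpl = {x | ⟪x - x₀, nv⟫ = 0})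
    (Tplus Tminus : Set (Euc N))
    (hTplus : Tplus = {x ∈ Tset | 0 < ⟪x - x₀, nv⟫})
    (hTminus : Tminus = {x ∈ Tset | ⟪x - x₀, nv⟫ < 0})
    (hvolp : 0 < volume Tplus) (hvolm : 0 < volume Tminus)
    (w : Euc N → ℝ)
    (hw : ∀ x, w x = if 0 < ⟪x - x₀, nv⟫ then infDist x Hpl else 0)
    (lam : Fin (N + 1) → Euc N × ℝ)
    (hlam : ∀ i j, faceAvg (F j) (affEval (lam i)) = if i = j then (1 : ℝ) else 0)
    (PiTw : Euc N → ℝ)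
    (hPiw : ∀ x, PiTw x = ∑ i, faceAvg (F i) w * affEval (lam i) x) :
    (∃! p : (Euc N × ℝ) × (Euc N × ℝ),
        (∀ x ∈ Hpl, affEval p.1 x = affEval p.2 x) ∧
        ⟪p.1.1 - p.2.1, nv⟫ = 1 ∧
        (∀ j, faceAvg (F j) (pwFun x₀ nv (affEval p.1) (affEval p.2)) = 0)) ∧
    (∀ p : (Euc N × ℝ) × (Euc N × ℝ),
        ((∀ x ∈ Hpl, affEval p.1 x = affEval p.2 x) ∧
          ⟪p.1.1 - p.2.1, nv⟫ = 1 ∧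
          (∀ j, faceAvg (F j) (pwFun x₀ nv (affEval p.1) (affEval p.2)) = 0)) →
        (∀ x, affEval p.1 x = ⟪x - x₀, nv⟫ - PiTw x) ∧
        (∀ x, affEval p.2 x = -(PiTw x)) ∧
        (∀ x ∈ Tset, pwFun x₀ nv (affEval p.1) (affEval p.2) x = w x - PiTw x)) :=
  statement2_general N v Tset F hF nv x₀ hn Hpl hH w hw lam hlam PiTw hPiw
end
end

section
/- Assume T_h^+ and T_h^- both have positive Lebesgue measure and let β^+, β^- > 0. Then the immersed finite element shape function space S_h(T) is a real vector space of dimension N+1. -/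
open MeasureTheory Metric Set
open scoped RealInnerProductSpace

noncomputable section

/-- Membership in the IFE shape function space `S_h(T)`: `φ` is piecewise affine with
respect to the hyperplane `Hpl` (through `x₀` with unit normal `nv`), its two affine
pieces agree on `Hpl`, and the flux condition `β⁺ ∇φ⁺·n = β⁻ ∇φ⁻·n` holds. -/
def IsIFEFun {N : ℕ} (x₀ nv : Euc N) (Hpl : Set (Euc N)) (βp βm : ℝ)
    (φ : Euc N → ℝ) : Prop :=
  ∃ p m : Euc N × ℝ,
    (∀ x ∈ Hpl, affEval p x = affEval m x) ∧
    βp * ⟪p.1, nv⟫ = βm * ⟪m.1, nv⟫ ∧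
    ∀ x, φ x = pwFun x₀ nv (affEval p) (affEval m) x

/-- The coefficient `t` such that the plus-side gradient is `m.1 + t • nv`. -/
noncomputable def tcoef {N : ℕ} (nv : Euc N) (βp βm : ℝ) (m : Euc N × ℝ) : ℝ :=
  ((βm - βp) / βp) * ⟪m.1, nv⟫

/-- The plus-side affine data determined by the minus-side data `m`. -/
noncomputable def Pfun {N : ℕ} (x₀ nv : Euc N) (βp βm : ℝ) (m : Euc N × ℝ) :
    Euc N × ℝ :=
  (m.1 + (tcoef nv βp βm m) • nv, m.2 - tcoef nv βp βm m * ⟪nv, x₀⟫)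

/-- The linear parametrization of the IFE space by the minus-side affine data. -/
noncomputable def Lmap {N : ℕ} (x₀ nv : Euc N) (βp βm : ℝ) :
    (Euc N × ℝ) →ₗ[ℝ] (Euc N → ℝ) where
  toFun m := pwFun x₀ nv (affEval (Pfun x₀ nv βp βm m)) (affEval m)
  map_add' a b := by
    funext x
    by_cases h : 0 < ⟪x - x₀, nv⟫
    · simp only [pwFun, if_pos h, affEval, Pfun, tcoef, Prod.fst_add, Prod.snd_add,
        inner_add_left, real_inner_smul_left, Pi.add_apply]
      ring
    · simp only [pwFun, if_neg h, affEval, Prod.fst_add, Prod.snd_add,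
        inner_add_left, Pi.add_apply]
      ring
  map_smul' c a := by
    funext x
    by_cases h : 0 < ⟪x - x₀, nv⟫
    · simp only [pwFun, if_pos h, affEval, Pfun, tcoef, Prod.smul_fst, Prod.smul_snd,
        smul_eq_mul, inner_add_left, real_inner_smul_left, Pi.smul_apply,
        RingHom.id_apply]
      ring
    · simp only [pwFun, if_neg h, affEval, Prod.smul_fst, Prod.smul_snd, smul_eq_mul,
        real_inner_smul_left, Pi.smul_apply, RingHom.id_apply]
      ring

/-- The IFE shape function space `S_h(T)` is a real vector space of dimension `N+1`. -/
theorem statement3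
    (N : ℕ) (hN : N = 2 ∨ N = 3)
    (v : Fin (N + 1) → Euc N) (hv : AffineIndependent ℝ v)
    (Tset : Set (Euc N)) (hTset : Tset = convexHull ℝ (Set.range v))
    (nv x₀ : Euc N) (hn : ‖nv‖ = 1)
    (Hpl : Set (Euc N)) (hH : Hpl = {x | ⟪x - x₀, nv⟫ = 0})
    (Tplus Tminus : Set (Euc N))
    (hTplus : Tplus = {x ∈ Tset | 0 < ⟪x - x₀, nv⟫})
    (hTminus : Tminus = {x ∈ Tset | ⟪x - x₀, nv⟫ < 0})
    (hvolp : 0 < volume Tplus) (hvolm : 0 < volume Tminus)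
    (βp βm : ℝ) (hβp : 0 < βp) (hβm : 0 < βm) :
    ∃ S : Submodule ℝ (Euc N → ℝ),
      (S : Set (Euc N → ℝ)) = {φ | IsIFEFun x₀ nv Hpl βp βm φ} ∧
      Module.finrank ℝ ↥S = N + 1 := by
  have hβp' : βp ≠ 0 := ne_of_gt hβp
  have h1 : ⟪nv, nv⟫ = (1 : ℝ) := by
    rw [real_inner_self_eq_norm_sq, hn]; norm_num
  refine ⟨LinearMap.range (Lmap x₀ nv βp βm), ?_, ?_⟩
  · ext φ
    simp only [SetLike.mem_coe, LinearMap.mem_range, Set.mem_setOf_eq]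
    constructor
    · rintro ⟨m, rfl⟩
      refine ⟨Pfun x₀ nv βp βm m, m, ?_, ?_, fun x => rfl⟩
      · intro x hx
        rw [hH] at hx
        have hx3 : ⟪nv, x⟫ - ⟪nv, x₀⟫ = 0 := by
          have h := real_inner_comm nv (x - x₀)
          rw [inner_sub_right] at h
          rw [← h]; exact hx
        simp only [affEval, Pfun, tcoef, inner_add_left, real_inner_smul_left]
        linear_combination ((βm - βp) / βp * (⟪m.1, nv⟫ : ℝ)) * hx3
      · have hdiv : (βm - βp) / βp * βp = βm - βp := div_mul_cancel₀ _ hβp'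
        simp only [Pfun, tcoef, inner_add_left, real_inner_smul_left, h1]
        linear_combination (⟪m.1, nv⟫ : ℝ) * hdiv
    · rintro ⟨p, m, hagree, hflux, hφ⟩
      refine ⟨m, ?_⟩
      have hmem : ∀ w : Euc N, ⟪w, nv⟫ = 0 → (x₀ + w) ∈ Hpl := by
        intro w hw
        rw [hH]
        show ⟪x₀ + w - x₀, nv⟫ = 0
        simpa using hw
      have h2 := hagree x₀ (by rw [hH]; show ⟪x₀ - x₀, nv⟫ = 0; simp)
      have hd0 : ∀ w : Euc N, ⟪w, nv⟫ = 0 → ⟪p.1 - m.1, w⟫ = 0 := by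
        intro w hw
        have h3 := hagree (x₀ + w) (hmem w hw)
        simp only [affEval, inner_add_right] at h2 h3
        rw [inner_sub_left]
        linarith
      set s : ℝ := ⟪p.1 - m.1, nv⟫ with hs
      set u : Euc N := p.1 - m.1 - s • nv with hu
      have hw : ⟪u, nv⟫ = 0 := by
        rw [hu, inner_sub_left, real_inner_smul_left, h1]; ring
      have hpu : ⟪p.1 - m.1, u⟫ = 0 := hd0 u hw
      have hnu : ⟪nv, u⟫ = 0 := by rw [real_inner_comm u nv]; exact hw
      have hd' : u = 0 := by
        have hz : ⟪u, u⟫ = (0 : ℝ) := by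
          calc ⟪u, u⟫ = ⟪p.1 - m.1, u⟫ - s * ⟪nv, u⟫ := by
                rw [hu, inner_sub_left, real_inner_smul_left]
            _ = 0 := by rw [hpu, hnu]; ring
        exact inner_self_eq_zero.mp hz
      have hp1 : p.1 = m.1 + s • nv := by
        rw [hu] at hd'
        have := sub_eq_zero.mp hd'
        rw [← this]; abel
      have hst : s = tcoef nv βp βm m := by
        have hthis : βp * (⟪m.1, nv⟫ + s * ⟪nv, nv⟫) = βm * ⟪m.1, nv⟫ := by
          rw [← real_inner_smul_left, ← inner_add_left, ← hp1]; exact hflux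
        rw [h1] at hthis
        rw [tcoef, div_mul_eq_mul_div, eq_div_iff hβp']
        linarith
      have hp2 : p.2 = m.2 - s * ⟪nv, x₀⟫ := by
        simp only [affEval] at h2
        rw [hp1, inner_add_left, real_inner_smul_left] at h2
        linarith
      have hpP : p = Pfun x₀ nv βp βm m := by
        rw [hst] at hp1 hp2
        exact Prod.ext hp1 hp2
      funext x
      show pwFun x₀ nv (affEval (Pfun x₀ nv βp βm m)) (affEval m) x = φ x
      rw [hφ x, ← hpP]
  · have hinj : Function.Injective (Lmap x₀ nv βp βm) := by
      rw [← LinearMap.ker_eq_bot, LinearMap.ker_eq_bot']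
      intro m hm
      have key : ∀ x : Euc N, ⟪x - x₀, nv⟫ ≤ 0 → ⟪m.1, x⟫ + m.2 = 0 := by
        intro x hx
        have hxv : pwFun x₀ nv (affEval (Pfun x₀ nv βp βm m)) (affEval m) x = 0 :=
          congrFun hm x
        rw [pwFun, if_neg (not_lt.mpr hx)] at hxv
        exact hxv
      set a : Euc N := x₀ - nv with ha
      have haa : ⟪a - x₀, nv⟫ ≤ 0 := by
        have hax : a - x₀ = -nv := by rw [ha]; abel
        rw [hax, inner_neg_left, h1]; norm_num
      have fa := key a haa
      set ε : ℝ := 1 / (2 * (‖m.1‖ + 1)) with hε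
      have hεpos : 0 < ε := by positivity
      have hcs : ⟪m.1, nv⟫ ≤ ‖m.1‖ := by
        have := real_inner_le_norm m.1 nv
        rwa [hn, mul_one] at this
      have hnn : (0 : ℝ) ≤ ‖m.1‖ := norm_nonneg _
      have hb : ⟪a + ε • m.1 - x₀, nv⟫ ≤ 0 := by
        have hax : a + ε • m.1 - x₀ = -nv + ε • m.1 := by rw [ha]; abel
        rw [hax, inner_add_left, inner_neg_left, real_inner_smul_left, h1]
        have h4 : ε * ⟪m.1, nv⟫ ≤ ε * ‖m.1‖ :=
          mul_le_mul_of_nonneg_left hcs (le_of_lt hεpos)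
        have h5 : ε * ‖m.1‖ ≤ 1 / 2 := by
          rw [hε, div_mul_eq_mul_div, one_mul,
            div_le_div_iff₀ (by positivity) (by norm_num)]
          nlinarith
        linarith
      have fb := key _ hb
      rw [inner_add_right, real_inner_smul_right] at fb
      have hm1 : ⟪m.1, m.1⟫ = (0 : ℝ) := by
        have hez : ε * ⟪m.1, m.1⟫ = 0 := by linarith
        rcases mul_eq_zero.mp hez with h | h
        · exact absurd h (ne_of_gt hεpos)
        · exact h
      have hm1' : m.1 = 0 := inner_self_eq_zero.mp hm1
      have hm2 : m.2 = 0 := by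
        rw [hm1'] at fa
        simpa using fa
      exact Prod.ext hm1' hm2
    have hrank := LinearMap.finrank_range_of_inj hinj
    rw [hrank]
    simp [Module.finrank_prod]
end
end

section
/- Let φ^+, φ^- : ℝ^N → ℝ be affine functions that agree on the hyperplane H and satisfy β^+ ∇φ^+ · n = β^- ∇φ^- · n for constants β^+, β^- > 0. Then, writing ρ = β^- /β^+, the constant gradient vectors satisfy min{ρ, 1} |∇φ^-| ≤ |∇φ^+| ≤ max{ρ, 1} |∇φ^-|, where |·| is the Euclidean norm. (This is the key step in the proof of the trace inequality for IFE functions, Lemma 5.2.) -/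
open MeasureTheory Metric Set
open scoped RealInnerProductSpace

noncomputable section

/-- Auxiliary: compare nonnegative reals via their squares. -/
lemma sq_le_imp {x y : ℝ} (hx : 0 ≤ x) (hy : 0 ≤ y) (h : x^2 ≤ y^2) : x ≤ y := by
  nlinarith

/-- If two affine functions agree on the hyperplane `H` and satisfy the flux
condition `β⁺ ∇φ⁺·n = β⁻ ∇φ⁻·n`, then with `ρ = β⁻/β⁺` their gradients satisfy
`min{ρ,1} |∇φ⁻| ≤ |∇φ⁺| ≤ max{ρ,1} |∇φ⁻|` (key step of Lemma 5.2). -/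
theorem statement10
    (N : ℕ) (hN : N = 2 ∨ N = 3)
    (nv x₀ : Euc N) (hn : ‖nv‖ = 1)
    (Hpl : Set (Euc N)) (hH : Hpl = {x | ⟪x - x₀, nv⟫ = 0})
    (βp βm : ℝ) (hβp : 0 < βp) (hβm : 0 < βm)
    (p m : Euc N × ℝ)
    (hagree : ∀ x ∈ Hpl, affEval p x = affEval m x)
    (hflux : βp * ⟪p.1, nv⟫ = βm * ⟪m.1, nv⟫) :
    min (βm / βp) 1 * ‖m.1‖ ≤ ‖p.1‖ ∧ ‖p.1‖ ≤ max (βm / βp) 1 * ‖m.1‖ := by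
  set b : ℝ := ⟪m.1, nv⟫ with hb
  set c : ℝ := ⟪p.1 - m.1, nv⟫ with hc
  have hnn : ⟪nv, nv⟫ = 1 := by
    rw [real_inner_self_eq_norm_sq, hn]; ring
  set v : Euc N := p.1 - m.1 - c • nv with hv
  have hvn : ⟪v, nv⟫ = 0 := by
    rw [hv, inner_sub_left, real_inner_smul_left, hnn, ← hc]; ring
  have hx0 : x₀ ∈ Hpl := by
    rw [hH]; simp only [mem_setOf_eq, sub_self, inner_zero_left]
  have hxv : x₀ + v ∈ Hpl := by
    rw [hH]; simp only [mem_setOf_eq, add_sub_cancel_left]; exact hvn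
  have h1 := hagree x₀ hx0
  have h2 := hagree (x₀ + v) hxv
  simp only [affEval, inner_add_right] at h1 h2
  have hpmv : ⟪p.1 - m.1, v⟫ = 0 := by
    rw [inner_sub_left]; linarith
  have hv0 : v = 0 := by
    have hvv : ⟪v, v⟫ = 0 := by
      nth_rewrite 1 [hv]
      have hvn' : ⟪nv, v⟫ = 0 := by rw [real_inner_comm]; exact hvn
      rw [inner_sub_left, real_inner_smul_left, hpmv, hvn']
      ring
    exact inner_self_eq_zero.mp hvv
  have hpm : p.1 = m.1 + c • nv := by
    have h3 : p.1 - m.1 = c • nv := by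
      rw [hv, sub_eq_zero] at hv0; exact hv0
    exact sub_eq_iff_eq_add'.mp h3
  have ha : ⟪p.1, nv⟫ = b + c := by
    rw [hc, inner_sub_left]; ring
  set ρ : ℝ := βm / βp with hρ
  have hρpos : 0 < ρ := div_pos hβm hβp
  have hrel : b + c = ρ * b := by
    rw [hρ]
    rw [ha] at hflux
    field_simp
    linarith
  have hsmn : ‖c • nv‖ = |c| := by
    rw [norm_smul, hn, mul_one, Real.norm_eq_abs]
  have hpsq : ‖p.1‖^2 = ‖m.1‖^2 + 2*c*b + c^2 := by
    rw [hpm, norm_add_sq_real, real_inner_smul_right, hsmn, sq_abs, ← hb]; ring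
  have hbsq : b^2 ≤ ‖m.1‖^2 := by
    have h4 := abs_real_inner_le_norm m.1 nv
    rw [hn, mul_one, ← hb] at h4
    nlinarith [le_abs_self b, neg_abs_le b, sq_abs b]
  have hmnn : (0:ℝ) ≤ ‖m.1‖ := norm_nonneg _
  have hpnn : (0:ℝ) ≤ ‖p.1‖ := norm_nonneg _
  clear_value b c ρ v
  clear hv hvn hx0 hxv h1 h2 hpmv hv0 hpm ha hflux hagree hsmn hb hc hρ hH
  have hcval : c = (ρ - 1) * b := by linear_combination hrel
  have hpsq2 : ‖p.1‖^2 = ‖m.1‖^2 + (ρ^2 - 1) * b^2 := by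
    rw [hpsq, hcval]; ring
  rcases le_total ρ 1 with hle | hle
  · rw [min_eq_left hle, max_eq_right hle, one_mul]
    constructor
    · apply sq_le_imp (mul_nonneg hρpos.le hmnn) hpnn
      nlinarith [mul_nonneg (show (0:ℝ) ≤ 1 - ρ^2 by nlinarith) (show (0:ℝ) ≤ ‖m.1‖^2 - b^2 by linarith)]
    · apply sq_le_imp hpnn hmnn
      nlinarith [mul_nonneg (show (0:ℝ) ≤ 1 - ρ^2 by nlinarith) (sq_nonneg b)]
  · rw [min_eq_right hle, max_eq_left hle, one_mul]
    constructor
    · apply sq_le_imp hmnn hpnn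
      nlinarith [mul_nonneg (show (0:ℝ) ≤ ρ^2 - 1 by nlinarith) (sq_nonneg b)]
    · apply sq_le_imp hpnn (mul_nonneg hρpos.le hmnn)
      nlinarith [mul_nonneg (show (0:ℝ) ≤ ρ^2 - 1 by nlinarith) (show (0:ℝ) ≤ ‖m.1‖^2 - b^2 by linarith)]
end
end

section
/- (Trace inequality for IFE functions, Lemma 5.2.) For every ϱ > 0 and β^+, β^- > 0 there exists a constant C, depending only on β^+, β^-, and ϱ, such that for every ϱ-shape-regular simplex T ⊂ ℝ^N (N ∈ {2,3}), every cutting hyperplane H for which T_h^+ and T_h^- have positive measure, and every φ ∈ S_h(T): ∫_{∂T} |∇_h φ|² dH^{N−1} ≤ C² h_T^{-1} ∫_T |∇_h φ|² dx, where ∇_h φ denotes the piecewise constant broken gradient equal to ∇φ^± on T_h^± (defined H^{N−1}-almost everywhere on ∂T). -/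
open MeasureTheory Metric Set
open scoped RealInnerProductSpace

noncomputable section

/-!
On each side of the interface `φ` is affine; continuity across `H` forces the two gradients to
share their tangential part, and the flux condition fixes the ratio `β⁻ / β⁺` of their normal
parts. Hence `|∇φ⁺|²` and `|∇φ⁻|²` agree up to the factor `κ² = max (β⁺/β⁻) (β⁻/β⁺)²`, and the
integrand `g = |∇_h φ|²` satisfies `c ≤ g ≤ κ² c` for a constant `c`. It remains to compare
measures. The boundary of `T` is covered by `N + 1` faces, each the image of the unit cube
`[0,1]^(N-1)` under an affine map with Lipschitz constant `(N-1) h_T`, so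
`H^{N-1}(∂T) ≤ (N+1) ((N-1) h_T)^(N-1)`; and `T` contains a ball of radius `r ≥ h_T / ϱ`, so
`|T| ≥ |B_1| (h_T / ϱ)^N`.
-/

open scoped Pointwise

section SimplexGeometry

variable {E : Type*} [NormedAddCommGroup E] [NormedSpace ℝ E]

theorem lipschitzWith_sum_smul {ι : Type*} [Fintype ι] (v : ι → E) {D : ℝ}
    (hD : ∀ i, ‖v i‖ ≤ D) :
    LipschitzWith (Real.toNNReal (Fintype.card ι * D)) fun t : ι → ℝ => ∑ i, t i • v i := by
  refine LipschitzWith.of_dist_le_mul fun t s => ?_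
  calc dist (∑ i, t i • v i) (∑ i, s i • v i) ≤ ∑ i, ‖(t i - s i) • v i‖ := by
        simpa only [dist_eq_norm, ← Finset.sum_sub_distrib, ← sub_smul] using norm_sum_le _ _
    _ ≤ ∑ _i : ι, dist t s * D := Finset.sum_le_sum fun i _ => by
        rw [norm_smul, ← dist_eq_norm]
        exact mul_le_mul (dist_le_pi_dist t s i) (hD i) (norm_nonneg _) dist_nonneg
    _ = Fintype.card ι * D * dist t s := by
        rw [Finset.sum_const, Finset.card_univ, nsmul_eq_mul]; ring
    _ ≤ Real.toNNReal (Fintype.card ι * D) * dist t s :=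
        mul_le_mul_of_nonneg_right (Real.le_coe_toNNReal _) dist_nonneg

theorem convexHull_range_subset_vadd_parallelepiped {d : ℕ} (p : Fin (d + 1) → E) :
    convexHull ℝ (range p) ⊆ p 0 +ᵥ parallelepiped fun i : Fin d => p i.succ - p 0 := by
  refine convexHull_min ?_ ((convex_parallelepiped _).vadd _)
  rintro _ ⟨i, rfl⟩
  refine Fin.cases ⟨0, ?_, by simp⟩ (fun i => ⟨p i.succ - p 0, ?_, by simp⟩) i
  · exact (mem_parallelepiped_iff _ _).2 ⟨0, ⟨le_rfl, zero_le_one⟩, by simp⟩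
  · refine (mem_parallelepiped_iff _ _).2 ⟨Pi.single i 1, ⟨?_, ?_⟩, by simp⟩
    · exact Pi.single_nonneg.2 zero_le_one
    · intro j
      rcases eq_or_ne j i with rfl | h <;> simp [*]

theorem AffineBasis.frontier_convexHull_subset {d : ℕ} (b : AffineBasis (Fin (d + 2)) ℝ E) :
    frontier (convexHull ℝ (range b)) ⊆
      ⋃ j : Fin (d + 2), convexHull ℝ (range (b ∘ j.succAbove)) := by
  intro x hx
  have hxT := ((finite_range b).isCompact_convexHull (𝕜 := ℝ)).isClosed.frontier_subset hx
  rw [b.convexHull_eq_nonneg_coord] at hxT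
  obtain ⟨j, hj⟩ : ∃ j, b.coord j x = 0 := by
    by_contra! h
    exact hx.2 (b.interior_convexHull ▸ fun i => (hxT i).lt_of_ne (h i).symm)
  have hsum := b.sum_coord_apply_eq_one x
  have hcomb := b.linear_combination_coord_eq_self x
  rw [Fin.sum_univ_succAbove _ j, hj, zero_add] at hsum
  rw [Fin.sum_univ_succAbove _ j, hj, zero_smul, zero_add] at hcomb
  exact mem_iUnion.2 ⟨j, mem_convexHull_of_exists_fintype _ (b ∘ j.succAbove)
    (fun _ => hxT _) hsum mem_range_self hcomb⟩

variable [MeasurableSpace E]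

def simplexTraceConst (μ : Measure E) (d : ℕ) (ϱ : ℝ) : ℝ :=
  (d + 2) * d ^ d * ϱ ^ (d + 1) / μ.real (ball 0 1)

theorem simplexTraceConst_pos [FiniteDimensional ℝ E] (μ : Measure E) [μ.IsAddHaarMeasure]
    (d : ℕ) {ϱ : ℝ} (hϱ : 0 < ϱ) : 0 < simplexTraceConst μ d ϱ := by
  have hω : 0 < μ.real (ball 0 1) :=
    ENNReal.toReal_pos (measure_ball_pos μ 0 one_pos).ne' measure_ball_lt_top.ne
  have hdd : (0 : ℝ) < (d : ℝ) ^ d := by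
    rcases Nat.eq_zero_or_pos d with rfl | hd
    · simp
    · positivity
  unfold simplexTraceConst
  positivity

variable [BorelSpace E]

theorem hausdorffMeasure_parallelepiped_le {ι : Type*} [Fintype ι] (v : ι → E) {D : ℝ}
    (hD₀ : 0 ≤ D) (hD : ∀ i, ‖v i‖ ≤ D) :
    μH[Fintype.card ι] (parallelepiped v) ≤
      ENNReal.ofReal ((Fintype.card ι * D) ^ Fintype.card ι) := by
  calc μH[Fintype.card ι] (parallelepiped v)
      ≤ Real.toNNReal (Fintype.card ι * D) ^ (Fintype.card ι : ℝ) *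
          μH[Fintype.card ι] (Icc (0 : ι → ℝ) 1) :=
        (lipschitzWith_sum_smul v hD).hausdorffMeasure_image_le (Nat.cast_nonneg _) _
    _ = ENNReal.ofReal ((Fintype.card ι * D) ^ Fintype.card ι) := by
        rw [hausdorffMeasure_pi_real, Real.volume_Icc_pi, ENNReal.rpow_natCast,
          ENNReal.ofReal_pow (by positivity)]
        simp [ENNReal.ofReal]

theorem hausdorffMeasure_convexHull_range_le {d : ℕ} (p : Fin (d + 1) → E) :
    μH[d] (convexHull ℝ (range p)) ≤ ENNReal.ofReal ((d * diam (range p)) ^ d) := by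
  have hD : ∀ i : Fin d, ‖p i.succ - p 0‖ ≤ diam (range p) := fun i => by
    rw [← dist_eq_norm]
    exact dist_le_diam_of_mem (finite_range p).isBounded (mem_range_self _) (mem_range_self _)
  calc μH[d] (convexHull ℝ (range p))
      ≤ μH[d] (p 0 +ᵥ parallelepiped fun i : Fin d => p i.succ - p 0) :=
        measure_mono (convexHull_range_subset_vadd_parallelepiped p)
    _ = μH[Fintype.card (Fin d)] (parallelepiped fun i : Fin d => p i.succ - p 0) := by
        rw [hausdorffMeasure_vadd _ (Or.inl (Nat.cast_nonneg d)), Fintype.card_fin]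
    _ ≤ ENNReal.ofReal ((d * diam (range p)) ^ d) := by
        simpa using hausdorffMeasure_parallelepiped_le _ diam_nonneg hD

theorem AffineBasis.hausdorffMeasure_frontier_convexHull_le {d : ℕ}
    (b : AffineBasis (Fin (d + 2)) ℝ E) :
    μH[d] (frontier (convexHull ℝ (range b))) ≤
      ENNReal.ofReal ((d + 2) * (d * diam (convexHull ℝ (range b))) ^ d) := by
  have hface (j : Fin (d + 2)) : μH[d] (convexHull ℝ (range (b ∘ j.succAbove))) ≤
      ENNReal.ofReal ((d * diam (convexHull ℝ (range b))) ^ d) := by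
    refine (hausdorffMeasure_convexHull_range_le (d := d) (b ∘ j.succAbove)).trans
      (ENNReal.ofReal_le_ofReal ?_)
    rw [convexHull_diam]
    gcongr
    exact diam_mono (range_comp_subset_range _ _) (finite_range b).isBounded
  have hcover : μH[d] (frontier (convexHull ℝ (range b)))
      ≤ ∑ j, μH[d] (convexHull ℝ (range (b ∘ Fin.succAbove j))) :=
    (measure_mono b.frontier_convexHull_subset).trans (measure_iUnion_fintype_le _ _)
  refine hcover.trans ((Finset.sum_le_sum fun j _ => hface j).trans (le_of_eq ?_))
  rw [Finset.sum_const, Finset.card_univ, Fintype.card_fin, nsmul_eq_mul,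
    ENNReal.ofReal_mul (by positivity)]
  norm_cast

theorem AffineBasis.setIntegral_frontier_convexHull_le {d : ℕ}
    (b : AffineBasis (Fin (d + 2)) ℝ E) {g : E → ℝ} {M : ℝ} (hg : ∀ x, ‖g x‖ ≤ M) :
    ∫ x in frontier (convexHull ℝ (range b)), g x ∂μH[d] ≤
      M * ((d + 2) * (d * diam (convexHull ℝ (range b))) ^ d) := by
  have hμ := b.hausdorffMeasure_frontier_convexHull_le
  have hh : 0 ≤ diam (convexHull ℝ (range b)) := diam_nonneg
  calc ∫ x in frontier (convexHull ℝ (range b)), g x ∂μH[d]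
      ≤ M * (μH[d] : Measure E).real (frontier (convexHull ℝ (range b))) :=
        (Real.le_norm_self _).trans (norm_setIntegral_le_of_norm_le_const
          (hμ.trans_lt ENNReal.ofReal_lt_top) fun x _ => hg x)
    _ ≤ M * ((d + 2) * (d * diam (convexHull ℝ (range b))) ^ d) :=
        mul_le_mul_of_nonneg_left (ENNReal.toReal_le_of_le_ofReal (by positivity) hμ)
          ((norm_nonneg _).trans (hg (b 0)))

theorem AffineBasis.setIntegral_frontier_le_of_le_mul (μ : Measure E) [μ.IsAddHaarMeasure]
    {d : ℕ} (b : AffineBasis (Fin (d + 2)) ℝ E) {z : E} {r ϱ : ℝ} (hr : 0 < r)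
    (hball : closedBall z r ⊆ convexHull ℝ (range b))
    (hreg : diam (convexHull ℝ (range b)) ≤ ϱ * r) {g : E → ℝ} (hg : Measurable g) {c K : ℝ}
    (hc : 0 ≤ c) (hK : 0 ≤ K) (hcg : ∀ x, c ≤ g x) (hgK : ∀ x, g x ≤ K * c) :
    ∫ x in frontier (convexHull ℝ (range b)), g x ∂μH[d] ≤
      K * simplexTraceConst μ d ϱ / diam (convexHull ℝ (range b)) *
        ∫ x in convexHull ℝ (range b), g x ∂μ := by
  have := b.finiteDimensional
  set T := convexHull ℝ (range b)
  set h := diam T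
  have hT : IsCompact T := (finite_range b).isCompact_convexHull (𝕜 := ℝ)
  have hdim : Module.finrank ℝ E = d + 1 := by
    have := b.card_eq_finrank_add_one
    simp only [Fintype.card_fin] at this
    omega
  have := Module.nontrivial_of_finrank_eq_succ hdim
  have hrh : 2 * r ≤ h := diam_closedBall_eq z hr.le ▸ diam_mono hball hT.isBounded
  have hω : 0 < μ.real (ball 0 1) :=
    ENNReal.toReal_pos (measure_ball_pos μ 0 one_pos).ne' measure_ball_lt_top.ne
  have hh : 0 < h := by linarith
  have hϱ : 0 < ϱ := by nlinarith
  have hgM : ∀ x, ‖g x‖ ≤ K * c := fun x => by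
    rw [Real.norm_of_nonneg (hc.trans (hcg x))]; exact hgK x
  have hvol : c * (r ^ (d + 1) * μ.real (ball 0 1)) ≤ ∫ x in T, g x ∂μ := by
    rw [← hdim, ← Measure.addHaar_real_closedBall μ z hr.le]
    refine (mul_le_mul_of_nonneg_left (measureReal_mono hball hT.measure_lt_top.ne) hc).trans
      (setIntegral_ge_of_const_le_real hT.isClosed.measurableSet hT.measure_lt_top.ne
        (fun x _ => hcg x) ?_)
    exact Measure.integrableOn_of_bounded hT.measure_lt_top.ne hg.aestronglyMeasurable
      (ae_of_all _ hgM)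
  calc ∫ x in frontier T, g x ∂μH[d] ≤ K * c * ((d + 2) * (d * h) ^ d) :=
        b.setIntegral_frontier_convexHull_le hgM
    _ = K * (d + 2) * d ^ d * c * h ^ (d + 1) / h := by
        field_simp
        ring
    _ ≤ K * (d + 2) * d ^ d * c * (ϱ * r) ^ (d + 1) / h := by gcongr
    _ = K * simplexTraceConst μ d ϱ / h * (c * (r ^ (d + 1) * μ.real (ball 0 1))) := by
        unfold simplexTraceConst
        field_simp
        ring
    _ ≤ K * simplexTraceConst μ d ϱ / h * ∫ x in T, g x ∂μ := by
        have := simplexTraceConst_pos μ d hϱ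
        gcongr

end SimplexGeometry

section InterfaceGradients

variable {F : Type*} [NormedAddCommGroup F] [InnerProductSpace ℝ F]

theorem eq_inner_smul_of_forall_inner_eq_zero {n w : F} (hn : ‖n‖ = 1)
    (hw : ∀ y, ⟪y, n⟫ = 0 → ⟪w, y⟫ = 0) : w = ⟪w, n⟫ • n := by
  set y := w - ⟪w, n⟫ • n
  have hnn : ⟪n, n⟫ = 1 := by rw [real_inner_self_eq_norm_sq, hn, one_pow]
  have hyn : ⟪y, n⟫ = 0 := by
    rw [inner_sub_left, real_inner_smul_left, hnn, mul_one, sub_self]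
  have hyy : ⟪y, y⟫ = 0 := by
    rw [inner_sub_left, real_inner_smul_left, real_inner_comm y n, hyn, hw y hyn, mul_zero,
      sub_zero]
  exact sub_eq_zero.1 (inner_self_eq_zero.1 hyy)

theorem norm_sq_eq_inner_sq_add_norm_sub_sq {n : F} (hn : ‖n‖ = 1) (w : F) :
    ‖w‖ ^ 2 = ⟪w, n⟫ ^ 2 + ‖w - ⟪w, n⟫ • n‖ ^ 2 := by
  have horth : ⟪⟪w, n⟫ • n, w - ⟪w, n⟫ • n⟫ = 0 := by
    rw [real_inner_smul_left, inner_sub_right, real_inner_smul_right, real_inner_self_eq_norm_sq,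
      hn, real_inner_comm]
    ring
  calc ‖w‖ ^ 2 = ‖⟪w, n⟫ • n + (w - ⟪w, n⟫ • n)‖ ^ 2 := by rw [add_sub_cancel]
    _ = ⟪w, n⟫ ^ 2 + ‖w - ⟪w, n⟫ • n‖ ^ 2 := by
        rw [norm_add_sq_real, horth, norm_smul, hn, Real.norm_eq_abs, mul_one, sq_abs]
        ring

end InterfaceGradients

theorem one_le_max_div_div {a b : ℝ} (ha : 0 < a) (hb : 0 < b) : 1 ≤ max (a / b) (b / a) := by
  rcases le_total a b with h | h
  · exact le_max_of_le_right ((one_le_div ha).2 h)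
  · exact le_max_of_le_left ((one_le_div hb).2 h)

theorem sub_eq_inner_smul_of_affEval_eq {N : ℕ} {nv x₀ : Euc N} (hnv : ‖nv‖ = 1)
    {p m : Euc N × ℝ} (hcont : ∀ x, ⟪x - x₀, nv⟫ = 0 → affEval p x = affEval m x) :
    p.1 - m.1 = ⟪p.1 - m.1, nv⟫ • nv := by
  refine eq_inner_smul_of_forall_inner_eq_zero hnv fun y hy => ?_
  have h₀ := hcont x₀ (by simp)
  have h₁ := hcont (x₀ + y) (by simpa using hy)
  simp only [affEval, inner_add_right] at h₀ h₁
  rw [inner_sub_left]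
  linarith

theorem norm_sq_le_of_interface {N : ℕ} {βp βm : ℝ} (hβp : 0 < βp) (hβm : 0 < βm)
    {nv x₀ : Euc N} (hnv : ‖nv‖ = 1) {p m : Euc N × ℝ}
    (hcont : ∀ x, ⟪x - x₀, nv⟫ = 0 → affEval p x = affEval m x)
    (hflux : βp * ⟪p.1, nv⟫ = βm * ⟪m.1, nv⟫) :
    ‖p.1‖ ^ 2 ≤ max (βp / βm) (βm / βp) ^ 2 * ‖m.1‖ ^ 2 := by
  set κ := max (βp / βm) (βm / βp)
  have htan : p.1 - ⟪p.1, nv⟫ • nv = m.1 - ⟪m.1, nv⟫ • nv := by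
    have := sub_eq_inner_smul_of_affEval_eq hnv hcont
    rw [inner_sub_left, sub_smul] at this
    rw [sub_eq_sub_iff_sub_eq_sub, this]
  have hnormal : ⟪p.1, nv⟫ = βm / βp * ⟪m.1, nv⟫ := by
    field_simp
    linarith
  have hκ : βm / βp ≤ κ := le_max_right _ _
  have hκ1 : 1 ≤ κ ^ 2 := one_le_pow₀ (one_le_max_div_div hβp hβm)
  rw [norm_sq_eq_inner_sq_add_norm_sub_sq hnv p.1, norm_sq_eq_inner_sq_add_norm_sub_sq hnv m.1,
    htan, hnormal]
  have hκ2 : (βm / βp) ^ 2 ≤ κ ^ 2 := pow_le_pow_left₀ (div_pos hβm hβp).le hκ 2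
  nlinarith [sq_nonneg ⟪m.1, nv⟫, sq_nonneg ‖m.1 - ⟪m.1, nv⟫ • nv‖]

theorem setIntegral_frontier_brokenGrad_le {d : ℕ} {ϱ βp βm : ℝ} (hβp : 0 < βp) (hβm : 0 < βm)
    (v : Fin (d + 2) → Euc (d + 1)) (hv : AffineIndependent ℝ v) {z : Euc (d + 1)} {r : ℝ}
    (hr : 0 < r) (hball : closedBall z r ⊆ convexHull ℝ (range v))
    (hreg : diam (convexHull ℝ (range v)) ≤ ϱ * r) {nv x₀ : Euc (d + 1)} (hnv : ‖nv‖ = 1)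
    {p m : Euc (d + 1) × ℝ} (hcont : ∀ x, ⟪x - x₀, nv⟫ = 0 → affEval p x = affEval m x)
    (hflux : βp * ⟪p.1, nv⟫ = βm * ⟪m.1, nv⟫) :
    ∫ x in frontier (convexHull ℝ (range v)),
        ‖if 0 < ⟪x - x₀, nv⟫ then p.1 else m.1‖ ^ 2 ∂μH[d] ≤
      max (βp / βm) (βm / βp) ^ 2 * simplexTraceConst (volume : Measure (Euc (d + 1))) d ϱ /
          diam (convexHull ℝ (range v)) *
        ∫ x in convexHull ℝ (range v), ‖if 0 < ⟪x - x₀, nv⟫ then p.1 else m.1‖ ^ 2 := by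
  let b : AffineBasis (Fin (d + 2)) ℝ (Euc (d + 1)) :=
    ⟨v, hv, hv.affineSpan_eq_top_iff_card_eq_finrank_add_one.2 (by simp)⟩
  have hpm := norm_sq_le_of_interface hβp hβm hnv hcont hflux
  have hmp := norm_sq_le_of_interface hβm hβp hnv (fun x hx => (hcont x hx).symm) hflux.symm
  rw [max_comm] at hmp
  refine b.setIntegral_frontier_le_of_le_mul volume hr hball hreg ?_ (le_min (sq_nonneg ‖p.1‖)
    (sq_nonneg ‖m.1‖)) (sq_nonneg _) (fun x => ?_) (fun x => ?_)
  · exact (Measurable.ite (measurableSet_lt measurable_const (by fun_prop)) measurable_const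
      measurable_const).norm.pow_const 2
  · split_ifs
    · exact min_le_left _ _
    · exact min_le_right _ _
  · have hκ1 : 1 ≤ max (βp / βm) (βm / βp) ^ 2 := one_le_pow₀ (one_le_max_div_div hβp hβm)
    rw [mul_min_of_nonneg _ _ (by positivity), le_min_iff]
    split_ifs
    · exact ⟨le_mul_of_one_le_left (sq_nonneg _) hκ1, hpm⟩
    · exact ⟨hmp, le_mul_of_one_le_left (sq_nonneg _) hκ1⟩

/-- Lemma 5.2 (trace inequality for IFE functions):
`‖∇_h φ‖_{L²(∂T)} ≤ C h_T^{-1/2} ‖∇_h φ‖_{L²(T)}` with `C = C(β⁺, β⁻, ϱ)`,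
stated in the squared form
`∫_{∂T} |∇_h φ|² dH^{N-1} ≤ C² h_T⁻¹ ∫_T |∇_h φ|² dx`. -/
theorem statement11
    (ϱ βp βm : ℝ) (hϱ : 0 < ϱ) (hβp : 0 < βp) (hβm : 0 < βm) :
    ∃ C : ℝ, 0 < C ∧
      ∀ (N : ℕ), (N = 2 ∨ N = 3) →
      ∀ (v : Fin (N + 1) → Euc N), AffineIndependent ℝ v →
      ∀ (Tset : Set (Euc N)), Tset = convexHull ℝ (Set.range v) →
      -- shape regularity: h_T ≤ ϱ r_T
      (∃ z r, 0 < r ∧ closedBall z r ⊆ Tset ∧ Metric.diam Tset ≤ ϱ * r) →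
      ∀ (nv x₀ : Euc N), ‖nv‖ = 1 →
      ∀ (Hpl : Set (Euc N)), Hpl = {x | ⟪x - x₀, nv⟫ = 0} →
      -- both pieces T_h^± of the cut simplex have positive measure
      0 < volume {x ∈ Tset | 0 < ⟪x - x₀, nv⟫} →
      0 < volume {x ∈ Tset | ⟪x - x₀, nv⟫ < 0} →
      -- φ ∈ S_h(T), with affine pieces `affEval p` on T_h^+ and `affEval m` on T_h^-
      ∀ (p m : Euc N × ℝ),
        (∀ x ∈ Hpl, affEval p x = affEval m x) →
        βp * ⟪p.1, nv⟫ = βm * ⟪m.1, nv⟫ →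
        -- broken gradient: ∇_h φ = p.1 on the plus side, m.1 on the minus side
        (∫ x in frontier Tset, ‖if 0 < ⟪x - x₀, nv⟫ then p.1 else m.1‖ ^ 2
            ∂(μH[(N : ℝ) - 1])) ≤
          C ^ 2 / Metric.diam Tset *
            ∫ x in Tset, ‖if 0 < ⟪x - x₀, nv⟫ then p.1 else m.1‖ ^ 2 := by
  set κ := max (βp / βm) (βm / βp)
  have hc₂ := simplexTraceConst_pos (volume : Measure (Euc 2)) 1 hϱ
  have hc₃ := simplexTraceConst_pos (volume : Measure (Euc 3)) 2 hϱ
  set c := κ ^ 2 * (simplexTraceConst (volume : Measure (Euc 2)) 1 ϱ +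
    simplexTraceConst (volume : Measure (Euc 3)) 2 ϱ)
  have hc : 0 < c := mul_pos (pow_pos (by positivity) 2) (add_pos hc₂ hc₃)
  refine ⟨√c, Real.sqrt_pos.2 hc, ?_⟩
  rintro N hN v hv _ rfl ⟨z, r, hr, hball, hreg⟩ nv x₀ hnv _ rfl - - p m hcont hflux
  obtain ⟨d, rfl⟩ : ∃ d, N = d + 1 := ⟨N - 1, by omega⟩
  rw [Real.sq_sqrt hc.le, show ((d + 1 : ℕ) : ℝ) - 1 = d by push_cast; ring]
  refine (setIntegral_frontier_brokenGrad_le hβp hβm v hv hr hball hreg hnv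
    (fun x hx => hcont x hx) hflux).trans (mul_le_mul_of_nonneg_right
      (div_le_div_of_nonneg_right ?_ diam_nonneg) (integral_nonneg fun _ => sq_nonneg _))
  obtain rfl | rfl : d = 1 ∨ d = 2 := by omega
  · exact mul_le_mul_of_nonneg_left (le_add_of_nonneg_right hc₃.le) (sq_nonneg κ)
  · exact mul_le_mul_of_nonneg_left (le_add_of_nonneg_left hc₂.le) (sq_nonneg κ)
end
end
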